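/- arXiv:1304.0407 — 3 statements merged into one kernel-verified Lean document; each statement's English description precedes it below -/
import Mathlib

section
/- Let n ≥ 1 and let η denote the Minkowski bilinear form on ℝ^{1+n}, η(x,y) = −x⁰y⁰ + Σ_{i=1}^{n} xⁱyⁱ. Suppose τ, τ′ ∈ ℝ^{1+n} satisfy η(τ,τ) < 0, η(τ′,τ′) < 0 and η(τ,τ′) < 0, and let γ₀ < 0 be a real constant. Then for every w ∈ ℝ^{1+n} and every v ∈ ℝ with (w,v) ≠ (0,0), one has η(τ,w)·η(w,τ′) − (1/2)·η(w,w)·η(τ,τ′) + (1/2)·γ₀·v²·η(τ,τ′) > 0. (That is, the energy flux ⟨F(T,v), ∇T′⟩ associated to two time-like covectors lying in the same cone is a strictly positive definite quadratic form in (∇v, v).) -/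
/-- The Minkowski bilinear form on `ℝ^{1+n}`. -/
noncomputable def eta (n : ℕ) (x y : Fin (n + 1) → ℝ) : ℝ :=
  -(x 0 * y 0) + ∑ i : Fin n, x i.succ * y i.succ

lemma eta_comm (n : ℕ) (x y : Fin (n+1) → ℝ) : eta n x y = eta n y x := by
  simp [eta, mul_comm]

lemma eta_comb2 (n : ℕ) (a b c d : ℝ) (x y s t : Fin (n+1) → ℝ) :
    eta n (a•x + b•y) (c•s + d•t) =
      a*c*eta n x s + a*d*eta n x t + b*c*eta n y s + b*d*eta n y t := by
  simp only [eta, Pi.add_apply, Pi.smul_apply, smul_eq_mul]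
  have h : ∀ i : Fin n, (a*x i.succ + b*y i.succ)*(c*s i.succ + d*t i.succ) =
      a*c*(x i.succ*s i.succ) + a*d*(x i.succ*t i.succ) + b*c*(y i.succ*s i.succ)
        + b*d*(y i.succ*t i.succ) := fun i => by ring
  rw [Finset.sum_congr rfl fun i _ => h i]
  simp only [Finset.sum_add_distrib, ← Finset.mul_sum]
  ring

lemma eta_right2 (n : ℕ) (c d : ℝ) (x s t : Fin (n+1) → ℝ) :
    eta n x (c•s + d•t) = c*eta n x s + d*eta n x t := by
  have := eta_comb2 n 1 0 c d x x s t
  simpa using this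

lemma perp_pos (n : ℕ) (τ u : Fin (n+1) → ℝ) (hτ : eta n τ τ < 0)
    (h : eta n τ u = 0) (hu : u ≠ 0) : 0 < eta n u u := by
  simp only [eta] at hτ h ⊢
  set a := τ 0 with ha
  set c := u 0 with hc
  set Sτ : ℝ := ∑ i : Fin n, τ i.succ * τ i.succ with hSτ
  set Su : ℝ := ∑ i : Fin n, u i.succ * u i.succ with hSu
  set S : ℝ := ∑ i : Fin n, τ i.succ * u i.succ with hS
  have hSτ0 : 0 ≤ Sτ := Finset.sum_nonneg fun i _ => mul_self_nonneg _
  have hSu0 : 0 ≤ Su := Finset.sum_nonneg fun i _ => mul_self_nonneg _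
  have hcs : S^2 ≤ Sτ * Su := by
    have := Finset.sum_mul_sq_le_sq_mul_sq Finset.univ (fun i : Fin n => τ i.succ)
      (fun i : Fin n => u i.succ)
    simpa [hS, hSτ, hSu, sq] using this
  have ha2 : Sτ < a * a := by linarith
  rcases eq_or_lt_of_le hSu0 with hSz | hSz
  · exfalso
    have hzero : ∀ i : Fin n, u i.succ = 0 := by
      intro i
      have := (Finset.sum_eq_zero_iff_of_nonneg
        (fun j (_ : j ∈ Finset.univ) => mul_self_nonneg (u j.succ))).1 hSz.symm i (by simp)
      exact mul_self_eq_zero.1 this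
    have hS0 : S = 0 := Finset.sum_eq_zero fun i _ => by rw [hzero i]; ring
    have hane : a ≠ 0 := by nlinarith
    have hc0 : c = 0 := by
      have : a * c = 0 := by rw [hS0] at h; linarith
      rcases mul_eq_zero.1 this with h' | h'
      · exact absurd h' hane
      · exact h'
    apply hu
    funext i
    refine Fin.cases ?_ ?_ i
    · exact hc0
    · exact hzero
  · have hac : a * c = S := by linarith
    have hacsq : (a*a) * (c*c) = S^2 := by rw [← hac]; ring
    nlinarith [hcs, hacsq, mul_lt_mul_of_pos_right ha2 hSz, mul_self_nonneg a]

lemma perp_nonneg (n : ℕ) (τ u : Fin (n+1) → ℝ) (hτ : eta n τ τ < 0)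
    (h : eta n τ u = 0) : 0 ≤ eta n u u := by
  by_cases hu : u = 0
  · subst hu; simp [eta]
  · exact le_of_lt (perp_pos n τ u hτ h hu)

lemma perp_cs (n : ℕ) (τ u z : Fin (n+1) → ℝ) (hτ : eta n τ τ < 0)
    (hu : eta n τ u = 0) (hz : eta n τ z = 0) :
    (eta n u z)^2 ≤ eta n u u * eta n z z := by
  have hsu0 : 0 ≤ eta n u u := perp_nonneg n τ u hτ hu
  have hsz0 : 0 ≤ eta n z z := perp_nonneg n τ z hτ hz
  set m := eta n u z with hm
  set su := eta n u u with hsu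
  set sz := eta n z z with hsz
  rcases eq_or_lt_of_le hsz0 with h0 | hpos
  · -- sz = 0 : show m = 0
    have hm0 : m = 0 := by
      by_contra hmne
      set t : ℝ := -(su+1)/(2*m) with ht
      have hperp : eta n τ ((1:ℝ)•u + t•z) = 0 := by
        rw [eta_right2, hu, hz]; ring
      have hnn : 0 ≤ eta n ((1:ℝ)•u + t•z) ((1:ℝ)•u + t•z) :=
        perp_nonneg n τ _ hτ hperp
      rw [eta_comb2, eta_comm n z u] at hnn
      rw [← hm, ← hsu, ← hsz, ← h0] at hnn
      have h2tm : t * m = -(su+1)/2 := by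
        rw [ht]; field_simp
      nlinarith [hnn, h2tm]
    rw [hm0, ← h0]
    simp
  · -- sz > 0
    have hperp : eta n τ (sz•u + (-m)•z) = 0 := by
      rw [eta_right2, hu, hz]; ring
    have hnn : 0 ≤ eta n (sz•u + (-m)•z) (sz•u + (-m)•z) :=
      perp_nonneg n τ _ hτ hperp
    rw [eta_comb2, eta_comm n z u] at hnn
    rw [← hm, ← hsu, ← hsz] at hnn
    nlinarith [hnn, hpos]

set_option maxHeartbeats 2000000 in
lemma key_scalar (p q r e f g γ₀ v : ℝ) (hp : p < 0) (hq : q < 0) (hr : r < 0)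
    (hγ : γ₀ < 0)
    (hsu0 : 0 ≤ p^2*q - p*r^2) (hsz0 : 0 ≤ p^2*g - p*e^2)
    (hcs : (p^2*f - p*e*r)^2 ≤ (p^2*q - p*r^2)*(p^2*g - p*e^2))
    (hpos : 0 < v^2 ∨ 0 < p^2*g - p*e^2 ∨ e ≠ 0) :
    0 < e*f - (1/2)*g*r + (1/2)*γ₀*v^2*r := by
  have hp2 : 0 < p^2 := by nlinarith
  have hpr : 0 < p*r := mul_pos_of_neg_of_neg hp hr
  obtain ⟨su, hsu⟩ : ∃ a, p^2*q - p*r^2 = a := ⟨_, rfl⟩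
  obtain ⟨sz, hsz⟩ : ∃ a, p^2*g - p*e^2 = a := ⟨_, rfl⟩
  obtain ⟨m, hm⟩ : ∃ a, p^2*f - p*e*r = a := ⟨_, rfl⟩
  rw [hsu] at hsu0
  rw [hsz] at hsz0
  rw [hsu, hsz, hm] at hcs
  rw [hsz] at hpos
  obtain ⟨X, hX⟩ : ∃ a, (1/2)*(p*r)*e^2 = a := ⟨_, rfl⟩
  obtain ⟨Y, hY⟩ : ∃ a, (-(1/2))*r*sz = a := ⟨_, rfl⟩
  have hXnn : 0 ≤ X := by rw [← hX]; nlinarith [hpr, sq_nonneg e]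
  have hYnn : 0 ≤ Y := by rw [← hY]; nlinarith
  have hid : p^2*(e*f - (1/2)*g*r) = e*m + X + Y := by
    rw [← hm, ← hX, ← hY, ← hsz]; ring
  have hsu_lt : su < -(p*r^2) := by
    rw [← hsu]; nlinarith [mul_pos hp2 (neg_pos.2 hq)]
  have h4 : (e*m)^2 ≤ 4*X*Y := by
    have h1 : (e*m)^2 = e^2*m^2 := by ring
    have h1' : e^2*m^2 ≤ e^2*(su*sz) := mul_le_mul_of_nonneg_left hcs (sq_nonneg e)
    have h2 : su*sz ≤ -(p*r^2)*sz := mul_le_mul_of_nonneg_right (le_of_lt hsu_lt) hsz0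
    have h2' : e^2*(su*sz) ≤ e^2*(-(p*r^2)*sz) := mul_le_mul_of_nonneg_left h2 (sq_nonneg e)
    have h3 : e^2*(-(p*r^2)*sz) = 4*X*Y := by rw [← hX, ← hY]; ring
    linarith [h1.le, h1', h2', h3.le]
  have hem : -(X+Y) ≤ e*m := by
    have hsq : (e*m)^2 ≤ (X+Y)^2 := by nlinarith [h4, sq_nonneg (X-Y)]
    nlinarith [hsq, hXnn, hYnn]
  have hTnn : 0 ≤ (1/2)*γ₀*v^2*r := by
    have h := mul_nonneg (mul_pos_of_neg_of_neg hγ hr).le (sq_nonneg v)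
    linarith [h]
  have hstrict : 0 < e*m + X + Y + p^2*((1/2)*γ₀*v^2*r) := by
    have hstep : ∀ _ : 0 < sz, e ≠ 0 → 0 < e*m + X + Y := by
      intro hszpos hene
      have hYpos : 0 < Y := by rw [← hY]; nlinarith
      have he2 : 0 < e^2 := by positivity
      have hXpos : 0 < X := by rw [← hX]; nlinarith [mul_pos hpr he2]
      have h4' : (e*m)^2 < 4*X*Y := by
        have h1 : (e*m)^2 = e^2*m^2 := by ring
        have h1' : e^2*m^2 ≤ e^2*(su*sz) := mul_le_mul_of_nonneg_left hcs (sq_nonneg e)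
        have hlt : su*sz < -(p*r^2)*sz := mul_lt_mul_of_pos_right hsu_lt hszpos
        have h2 : e^2*(su*sz) < e^2*(-(p*r^2)*sz) := mul_lt_mul_of_pos_left hlt he2
        have h3 : e^2*(-(p*r^2)*sz) = 4*X*Y := by rw [← hX, ← hY]; ring
        linarith [h1.le, h1', h2, h3.le]
      have hsq : (e*m)^2 < (X+Y)^2 := by nlinarith [h4', sq_nonneg (X-Y)]
      nlinarith [hsq, hXpos, hYpos]
    rcases hpos with hv | hszpos | hene
    · have hT : 0 < (1/2)*γ₀*v^2*r := by
        have := mul_pos (mul_pos_of_neg_of_neg hγ hr) hv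
        nlinarith [this]
      nlinarith [hem, mul_pos hp2 hT]
    · by_cases he : e = 0
      · have hYpos : 0 < Y := by rw [← hY]; nlinarith
        have hX0 : X = 0 := by rw [← hX, he]; ring
        have hm0 : e*m = 0 := by rw [he]; ring
        nlinarith [hYpos, hX0, hm0, mul_nonneg (le_of_lt hp2) hTnn]
      · have := hstep hszpos he
        nlinarith [this, mul_nonneg (le_of_lt hp2) hTnn]
    · rcases eq_or_lt_of_le hsz0 with h0 | hszpos
      · have hm0 : m = 0 := by
          have h1 : m^2 ≤ su * sz := hcs
          rw [← h0] at h1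
          have h2 : m^2 ≤ 0 := by linarith
          nlinarith [sq_nonneg m, h2]
        have he2 : 0 < e^2 := by positivity
        have hXpos : 0 < X := by rw [← hX]; nlinarith [mul_pos hpr he2]
        rw [hm0]
        nlinarith [hXpos, hYnn, mul_nonneg (le_of_lt hp2) hTnn]
      · have := hstep hszpos hene
        nlinarith [this, mul_nonneg (le_of_lt hp2) hTnn]
  by_contra hcon
  push_neg at hcon
  have hfin : p^2*(e*f - (1/2)*g*r + (1/2)*γ₀*v^2*r) ≤ 0 :=
    mul_nonpos_of_nonneg_of_nonpos hp2.le hcon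
  linarith [hstrict, hid, hfin]

theorem stmt0 (n : ℕ) (hn : 1 ≤ n) (τ τ' : Fin (n + 1) → ℝ) (γ₀ : ℝ)
    (hτ : eta n τ τ < 0) (hτ' : eta n τ' τ' < 0) (hττ' : eta n τ τ' < 0)
    (hγ : γ₀ < 0) :
    ∀ (w : Fin (n + 1) → ℝ) (v : ℝ), (w, v) ≠ (0, 0) →
      0 < eta n τ w * eta n w τ' - (1 / 2) * eta n w w * eta n τ τ'
          + (1 / 2) * γ₀ * v ^ 2 * eta n τ τ' := by
  intro w v hne
  have hpne : eta n τ τ ≠ 0 := ne_of_lt hτ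
  set p := eta n τ τ with hpdef
  set q := eta n τ' τ' with hqdef
  set r := eta n τ τ' with hrdef
  set e := eta n τ w with hedef
  set f := eta n w τ' with hfdef
  set g := eta n w w with hgdef
  set u : Fin (n+1) → ℝ := p•τ' + (-r)•τ with hudef
  set z : Fin (n+1) → ℝ := p•w + (-e)•τ with hzdef
  have hperpu : eta n τ u = 0 := by
    rw [hudef, eta_right2, ← hrdef, ← hpdef]; ring
  have hperpz : eta n τ z = 0 := by
    rw [hzdef, eta_right2, ← hedef, ← hpdef]; ring
  have hsu : eta n u u = p^2*q - p*r^2 := by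
    rw [hudef, eta_comb2, eta_comm n τ' τ, ← hqdef, ← hrdef, ← hpdef]; ring
  have hsz : eta n z z = p^2*g - p*e^2 := by
    rw [hzdef, eta_comb2, eta_comm n w τ, ← hgdef, ← hedef, ← hpdef]; ring
  have hmval : eta n u z = p^2*f - p*e*r := by
    rw [hudef, hzdef, eta_comb2, eta_comm n τ' w, eta_comm n τ' τ,
      ← hfdef, ← hrdef, ← hedef, ← hpdef]; ring
  have hsu0 : 0 ≤ p^2*q - p*r^2 := hsu ▸ perp_nonneg n τ u hτ hperpu
  have hsz0 : 0 ≤ p^2*g - p*e^2 := hsz ▸ perp_nonneg n τ z hτ hperpz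
  have hcs : (p^2*f - p*e*r)^2 ≤ (p^2*q - p*r^2)*(p^2*g - p*e^2) := by
    have := perp_cs n τ u z hτ hperpu hperpz
    rw [hsu, hsz, hmval] at this
    exact this
  have hpos : 0 < v^2 ∨ 0 < p^2*g - p*e^2 ∨ e ≠ 0 := by
    by_cases hv : v = 0
    · have hw : w ≠ 0 := by
        intro hw0
        exact hne (by rw [hw0, hv])
      by_cases hz0 : z = 0
      · right; right
        intro he0
        apply hw
        have hz0' : p•w + (-e)•τ = 0 := by rw [← hzdef]; exact hz0
        rw [he0] at hz0'
        simp at hz0'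
        rcases hz0' with h' | h'
        · exact absurd h' hpne
        · exact h'
      · right; left
        have := perp_pos n τ z hτ hperpz hz0
        rw [hsz] at this
        exact this
    · left
      positivity
  exact key_scalar p q r e f g γ₀ v hτ hτ' hττ' hγ hsu0 hsz0 hcs hpos
end

section
/- Let n ≥ 1, let U ⊆ ℝ^{n+1} be open, let g : U → (symmetric invertible (n+1)×(n+1) real matrices) be smooth, let ω : U → (0,∞) be smooth, and let u : U → ℝ be smooth. For an invertible symmetric matrix field G define the coordinate wave operator □_G u := |det G|^{−1/2} Σ_{μ,ν=0}^{n} ∂_μ( |det G|^{1/2} (G^{−1})^{μν} ∂_ν u ). Set g̃ := ω²g and γ := −ω^{(n−1)/2}·□_{g̃}( ω^{(1−n)/2} ). Then on U: □_g( ω^{(n−1)/2} u ) = ω^{(n+3)/2}·( □_{g̃} u + γ·u ). -/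
/-!
Write `□_G = |det G|^{-1/2} L_{A_G}` with the divergence-form operator
`L_A u = ∂_μ(A^{μν} ∂_ν u)` and the densitized inverse metric `A_G = |det G|^{1/2} G⁻¹`.
For `g̃ = ω² g` in dimension `n + 1` one has `A_{g̃} = φ² A_g` with `φ = ω^{(n-1)/2}`.
For symmetric `A` the Leibniz rule gives `φ L_A(φ u) = L_{φ²A} u + φ u L_A φ`, the cross terms
`A^{μν}(∂_ν φ ∂_μ u - ∂_μ φ ∂_ν u)` cancelling. Taking `u = φ⁻¹` there, and using `L_A 1 = 0`,
gives `L_A φ = -L_{φ²A}(φ⁻¹)`; the powers of `ω` coming from `|det g̃|^{-1/2}` then combine to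
the stated identity.
-/

noncomputable section

/-- Partial derivative `∂_μ` of a real-valued function on `ℝ^{n+1}`. -/
def pd {k : ℕ} (μ : Fin k) (f : (Fin k → ℝ) → ℝ) (x : Fin k → ℝ) : ℝ :=
  fderiv ℝ f x (Pi.single μ 1)

/-- The coordinate wave operator
`□_G u = |det G|^{-1/2} Σ_{μ,ν} ∂_μ(|det G|^{1/2} (G⁻¹)^{μν} ∂_ν u)`. -/
def waveOp {n : ℕ} (G : (Fin (n + 1) → ℝ) → Fin (n + 1) → Fin (n + 1) → ℝ)
    (u : (Fin (n + 1) → ℝ) → ℝ) (x : Fin (n + 1) → ℝ) : ℝ :=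
  |(Matrix.of (G x)).det| ^ (-(1 : ℝ) / 2) *
    ∑ μ, ∑ ν,
      pd μ (fun y =>
        |(Matrix.of (G y)).det| ^ ((1 : ℝ) / 2) * (Matrix.of (G y))⁻¹ μ ν * pd ν u y) x

open Filter Topology

section PartialDerivative

variable {k : ℕ} {f h : (Fin k → ℝ) → ℝ} {x : Fin k → ℝ} {U : Set (Fin k → ℝ)}

theorem pd_congr (hfh : f =ᶠ[𝓝 x] h) (μ : Fin k) : pd μ f x = pd μ h x := by
  rw [pd, pd, hfh.fderiv_eq]

theorem pd_const (c : ℝ) (μ : Fin k) (x : Fin k → ℝ) : pd μ (fun _ => c) x = 0 := by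
  simp [pd]

theorem pd_add (hf : DifferentiableAt ℝ f x) (hh : DifferentiableAt ℝ h x) (μ : Fin k) :
    pd μ (fun y => f y + h y) x = pd μ f x + pd μ h x := by
  simp [pd, fderiv_fun_add hf hh]

theorem pd_mul (hf : DifferentiableAt ℝ f x) (hh : DifferentiableAt ℝ h x) (μ : Fin k) :
    pd μ (fun y => f y * h y) x = pd μ f x * h x + f x * pd μ h x := by
  simp only [pd, fderiv_fun_mul hf hh, _root_.add_apply, _root_.smul_apply, smul_eq_mul]
  ring

theorem pd_sq (hf : DifferentiableAt ℝ f x) (μ : Fin k) :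
    pd μ (fun y => f y ^ 2) x = 2 * f x * pd μ f x := by
  simp only [sq]
  rw [pd_mul hf hf]
  ring

theorem ContDiffOn.differentiableAt_pd (hf : ContDiffOn ℝ 2 f U) (hU : IsOpen U) (hx : x ∈ U)
    (ν : Fin k) : DifferentiableAt ℝ (pd ν f) x := by
  have hpd : ContDiffOn ℝ 1 (fun y => fderiv ℝ f y (Pi.single ν 1)) U :=
    (hf.fderiv_of_isOpen hU (by norm_num)).clm_apply contDiffOn_const
  exact (hpd.contDiffAt (hU.mem_nhds hx)).differentiableAt one_ne_zero

end PartialDerivative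

theorem Finset.sum_sum_mul_antisymm_eq_zero {ι R : Type*} [Fintype ι] [CommRing R]
    {a : ι → ι → R} (ha : ∀ i j, a i j = a j i) (p q : ι → R) :
    ∑ i, ∑ j, a i j * (p j * q i - p i * q j) = 0 := by
  have hswap : ∑ i, ∑ j, a i j * (p j * q i) = ∑ i, ∑ j, a i j * (p i * q j) := by
    rw [Finset.sum_comm]
    simp only [ha, mul_comm (p _)]
  simp only [mul_sub, Finset.sum_sub_distrib, hswap, sub_self]

def divOp {k : ℕ} (A : (Fin k → ℝ) → Fin k → Fin k → ℝ) (u : (Fin k → ℝ) → ℝ)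
    (x : Fin k → ℝ) : ℝ :=
  ∑ μ, ∑ ν, pd μ (fun y => A y μ ν * pd ν u y) x

section DivergenceForm

variable {k : ℕ} {A : (Fin k → ℝ) → Fin k → Fin k → ℝ} {φ u : (Fin k → ℝ) → ℝ}
  {x : Fin k → ℝ} {U : Set (Fin k → ℝ)}

theorem mul_pd_mul_pd_mul (hU : IsOpen U) (hx : x ∈ U) (μ ν : Fin k)
    (hA : DifferentiableAt ℝ (fun y => A y μ ν) x)
    (hφ : ContDiffOn ℝ 2 φ U) (hu : ContDiffOn ℝ 2 u U) :
    φ x * pd μ (fun y => A y μ ν * pd ν (fun y => φ y * u y) y) x =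
      pd μ (fun y => φ y ^ 2 * A y μ ν * pd ν u y) x
        + φ x * u x * pd μ (fun y => A y μ ν * pd ν φ y) x
        + φ x * A x μ ν * (pd ν φ x * pd μ u x - pd μ φ x * pd ν u x) := by
  have hdiff : ∀ {f : (Fin k → ℝ) → ℝ}, ContDiffOn ℝ 2 f U → ∀ y ∈ U, DifferentiableAt ℝ f y :=
    fun hf y hy => (hf.contDiffAt (hU.mem_nhds hy)).differentiableAt two_ne_zero
  have hprod : (fun y => A y μ ν * pd ν (fun y => φ y * u y) y) =ᶠ[𝓝 x]
      fun y => A y μ ν * (pd ν φ y * u y + φ y * pd ν u y) :=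
    eventually_of_mem (hU.mem_nhds hx) fun y hy => by
      dsimp only
      rw [pd_mul (hdiff hφ y hy) (hdiff hu y hy)]
  have hφx := hdiff hφ x hx
  have hux := hdiff hu x hx
  have hφ' := hφ.differentiableAt_pd hU hx ν
  have hu' := hu.differentiableAt_pd hU hx ν
  rw [pd_congr hprod]
  -- `fun_prop` discharges the side conditions of the Leibniz rules from the four facts above.
  simp (disch := fun_prop) only [pd_mul, pd_add, pd_sq]
  ring

theorem divOp_congr {B : (Fin k → ℝ) → Fin k → Fin k → ℝ} {v : (Fin k → ℝ) → ℝ}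
    (hU : IsOpen U) (hx : x ∈ U) (hAB : Set.EqOn A B U) (huv : Set.EqOn u v U) :
    divOp A u x = divOp B v x := by
  refine Finset.sum_congr rfl fun μ _ => Finset.sum_congr rfl fun ν _ => pd_congr ?_ μ
  filter_upwards [hU.mem_nhds hx] with y hy
  rw [hAB hy, pd_congr (eventually_of_mem (hU.mem_nhds hy) huv)]

theorem divOp_const (A : (Fin k → ℝ) → Fin k → Fin k → ℝ) (c : ℝ) (x : Fin k → ℝ) :
    divOp A (fun _ => c) x = 0 := by
  simp [divOp, pd_const]

theorem divOp_mul (hU : IsOpen U) (hx : x ∈ U)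
    (hA : ∀ μ ν, DifferentiableAt ℝ (fun y => A y μ ν) x) (hAsymm : ∀ μ ν, A x μ ν = A x ν μ)
    (hφ : ContDiffOn ℝ 2 φ U) (hu : ContDiffOn ℝ 2 u U) :
    φ x * divOp A (fun y => φ y * u y) x =
      divOp (fun y μ ν => φ y ^ 2 * A y μ ν) u x + φ x * u x * divOp A φ x := by
  simp only [divOp, Finset.mul_sum, mul_pd_mul_pd_mul hU hx _ _ (hA _ _) hφ hu,
    Finset.sum_add_distrib]
  rw [Finset.sum_sum_mul_antisymm_eq_zero (fun μ ν => by rw [hAsymm]), add_zero]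

theorem divOp_mul_of_mul_eq_one {ψ : (Fin k → ℝ) → ℝ} (hU : IsOpen U) (hx : x ∈ U)
    (hA : ∀ μ ν, DifferentiableAt ℝ (fun y => A y μ ν) x) (hAsymm : ∀ μ ν, A x μ ν = A x ν μ)
    (hφ : ContDiffOn ℝ 2 φ U) (hψ : ContDiffOn ℝ 2 ψ U) (hu : ContDiffOn ℝ 2 u U)
    (hφψ : ∀ y ∈ U, φ y * ψ y = 1) :
    φ x * divOp A (fun y => φ y * u y) x =
      divOp (fun y μ ν => φ y ^ 2 * A y μ ν) u x
        - φ x * u x * divOp (fun y μ ν => φ y ^ 2 * A y μ ν) ψ x := by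
  have hφ_eq := divOp_mul hU hx hA hAsymm hφ hψ
  rw [divOp_congr hU hx (fun _ _ => rfl) hφψ, divOp_const, hφψ x hx, mul_zero] at hφ_eq
  rw [divOp_mul hU hx hA hAsymm hφ hu]
  linear_combination -(φ x * u x) * hφ_eq

end DivergenceForm

namespace Matrix

variable {ι : Type*} [Fintype ι] [DecidableEq ι]

theorem abs_det_smul_rpow (M : Matrix ι ι ℝ) {c : ℝ} (hc : 0 < c) (r : ℝ) :
    |(c • M).det| ^ r = c ^ (Fintype.card ι * r) * |M.det| ^ r := by
  rw [det_smul, abs_mul, abs_pow, abs_of_pos hc, Real.mul_rpow (by positivity) (abs_nonneg _),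
    ← Real.rpow_natCast, ← Real.rpow_mul hc.le]

-- For singular `M` both sides are the junk value `0`.
theorem inv_smul_of_ne_zero {K : Type*} [Field K] (M : Matrix ι ι K) {c : K} (hc : c ≠ 0) :
    (c • M)⁻¹ = c⁻¹ • M⁻¹ := by
  by_cases hM : IsUnit M.det
  · exact inv_smul' (A := M) (Units.mk0 c hc) hM
  · have hcM : ¬IsUnit (c • M).det := by
      rwa [det_smul, IsUnit.mul_iff, not_and_or, or_iff_right (by simp [hc])]
    rw [nonsing_inv_apply_not_isUnit _ hM, nonsing_inv_apply_not_isUnit _ hcM, smul_zero]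

end Matrix

section MatrixDifferentiability

variable {𝕜 E ι : Type*} [NontriviallyNormedField 𝕜] [NormedAddCommGroup E] [NormedSpace 𝕜 E]
  [Fintype ι] [DecidableEq ι] {A : E → Matrix ι ι 𝕜} {x : E}

theorem differentiableAt_det (hA : ∀ i j, DifferentiableAt 𝕜 (fun y => A y i j) x) :
    DifferentiableAt 𝕜 (fun y => (A y).det) x := by
  simp only [Matrix.det_apply, Units.smul_def, zsmul_eq_mul]
  fun_prop

theorem differentiableAt_adjugate_apply (hA : ∀ i j, DifferentiableAt 𝕜 (fun y => A y i j) x)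
    (i j : ι) : DifferentiableAt 𝕜 (fun y => (A y).adjugate i j) x := by
  simp only [Matrix.adjugate_apply]
  refine differentiableAt_det fun k l => ?_
  by_cases hk : k = j
  · simp [hk]
  · simpa [Matrix.updateRow_ne hk] using hA k l

theorem differentiableAt_inv_apply (hA : ∀ i j, DifferentiableAt 𝕜 (fun y => A y i j) x)
    (hdet : (A x).det ≠ 0) (i j : ι) : DifferentiableAt 𝕜 (fun y => (A y)⁻¹ i j) x := by
  simp only [Matrix.inv_def, Matrix.smul_apply, Ring.inverse_eq_inv', smul_eq_mul]
  exact ((differentiableAt_det hA).inv hdet).mul (differentiableAt_adjugate_apply hA i j)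

end MatrixDifferentiability

def densitizedInverse {k : ℕ} (G : (Fin k → ℝ) → Fin k → Fin k → ℝ) (y : Fin k → ℝ)
    (μ ν : Fin k) : ℝ :=
  |(Matrix.of (G y)).det| ^ ((1 : ℝ) / 2) * (Matrix.of (G y))⁻¹ μ ν

theorem waveOp_eq_divOp {n : ℕ} (G : (Fin (n + 1) → ℝ) → Fin (n + 1) → Fin (n + 1) → ℝ)
    (u : (Fin (n + 1) → ℝ) → ℝ) (x : Fin (n + 1) → ℝ) :
    waveOp G u x = |(Matrix.of (G x)).det| ^ (-(1 : ℝ) / 2) * divOp (densitizedInverse G) u x :=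
  rfl

section DensitizedInverse

variable {k : ℕ} {G : (Fin k → ℝ) → Fin k → Fin k → ℝ} {ω : (Fin k → ℝ) → ℝ} {x : Fin k → ℝ}

theorem densitizedInverse_symm (hG : ∀ μ ν, G x μ ν = G x ν μ) (μ ν : Fin k) :
    densitizedInverse G x μ ν = densitizedInverse G x ν μ := by
  have hsymm : (Matrix.of (G x)).IsSymm := Matrix.IsSymm.ext fun i j => hG j i
  rw [densitizedInverse, densitizedInverse, hsymm.inv.apply]

theorem differentiableAt_densitizedInverse (hG : DifferentiableAt ℝ G x)
    (hdet : (Matrix.of (G x)).det ≠ 0) (μ ν : Fin k) :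
    DifferentiableAt ℝ (fun y => densitizedInverse G y μ ν) x := by
  have hentries : ∀ i j, DifferentiableAt ℝ (fun y => Matrix.of (G y) i j) x := fun i j =>
    differentiableAt_pi.1 (differentiableAt_pi.1 hG i) j
  exact (((differentiableAt_det hentries).abs hdet).rpow_const
    (Or.inl (abs_ne_zero.2 hdet))).mul (differentiableAt_inv_apply hentries hdet μ ν)

theorem abs_det_conformal_rpow (hω : 0 < ω x) (r : ℝ) :
    |(Matrix.of (fun μ ν => ω x ^ 2 * G x μ ν)).det| ^ r
      = ω x ^ (2 * k * r) * |(Matrix.of (G x)).det| ^ r := by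
  rw [show Matrix.of (fun μ ν => ω x ^ 2 * G x μ ν) = ω x ^ 2 • Matrix.of (G x) from rfl,
    Matrix.abs_det_smul_rpow _ (by positivity), Fintype.card_fin, ← Real.rpow_natCast,
    ← Real.rpow_mul hω.le]
  ring_nf

theorem densitizedInverse_conformal (hω : 0 < ω x) (μ ν : Fin k) :
    densitizedInverse (fun y μ ν => ω y ^ 2 * G y μ ν) x μ ν
      = (ω x ^ (((k : ℝ) - 2) / 2)) ^ 2 * densitizedInverse G x μ ν := by
  have hpow : ω x ^ (2 * k * (1 / 2 : ℝ)) * (ω x ^ 2)⁻¹ = (ω x ^ (((k : ℝ) - 2) / 2)) ^ 2 := by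
    rw [← Real.rpow_mul_natCast hω.le, ← Real.rpow_two, ← Real.rpow_neg hω.le,
      ← Real.rpow_add hω]
    ring_nf
  rw [densitizedInverse, densitizedInverse, abs_det_conformal_rpow hω,
    show Matrix.of (fun μ ν => ω x ^ 2 * G x μ ν) = ω x ^ 2 • Matrix.of (G x) from rfl,
    Matrix.inv_smul_of_ne_zero _ (by positivity), Matrix.smul_apply, smul_eq_mul, ← hpow]
  ring

end DensitizedInverse

theorem divOp_densitizedInverse_conformal {n : ℕ} {U : Set (Fin (n + 1) → ℝ)} (hU : IsOpen U)
    {x : Fin (n + 1) → ℝ} (hx : x ∈ U) {G : (Fin (n + 1) → ℝ) → Fin (n + 1) → Fin (n + 1) → ℝ}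
    {ω : (Fin (n + 1) → ℝ) → ℝ} (hω : ∀ y ∈ U, 0 < ω y) (v : (Fin (n + 1) → ℝ) → ℝ) :
    divOp (densitizedInverse fun y μ ν => ω y ^ 2 * G y μ ν) v x =
      divOp (fun y μ ν => (ω y ^ (((n : ℝ) - 1) / 2)) ^ 2 * densitizedInverse G y μ ν) v x := by
  refine divOp_congr hU hx (fun y hy => funext₂ fun μ ν => ?_) fun _ _ => rfl
  rw [densitizedInverse_conformal (hω y hy), Nat.cast_succ,
    show ((n : ℝ) + 1 - 2) / 2 = ((n : ℝ) - 1) / 2 by ring]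

theorem stmt3_general (n : ℕ) (U : Set (Fin (n + 1) → ℝ)) (hU : IsOpen U)
    (g : (Fin (n + 1) → ℝ) → Fin (n + 1) → Fin (n + 1) → ℝ)
    (ω u : (Fin (n + 1) → ℝ) → ℝ)
    (hg : ContDiffOn ℝ (⊤ : ℕ∞) g U)
    (hgsymm : ∀ x ∈ U, ∀ μ ν, g x μ ν = g x ν μ)
    (hginv : ∀ x ∈ U, IsUnit (Matrix.of (g x)))
    (hω : ContDiffOn ℝ (⊤ : ℕ∞) ω U) (hωpos : ∀ x ∈ U, 0 < ω x)
    (hu : ContDiffOn ℝ (⊤ : ℕ∞) u U) :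
    ∀ x ∈ U,
      waveOp g (fun y => ω y ^ (((n : ℝ) - 1) / 2) * u y) x =
        ω x ^ (((n : ℝ) + 3) / 2) *
          (waveOp (fun y μ ν => ω y ^ 2 * g y μ ν) u x +
            (-(ω x ^ (((n : ℝ) - 1) / 2) *
                waveOp (fun y μ ν => ω y ^ 2 * g y μ ν)
                  (fun y => ω y ^ ((1 - (n : ℝ)) / 2)) x)) * u x) := by
  intro x hx
  have h2 : (2 : WithTop ℕ∞) ≤ (⊤ : ℕ∞) := WithTop.coe_le_coe.2 le_top
  have hωne : ∀ y ∈ U, ω y ≠ 0 := fun y hy => (hωpos y hy).ne'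
  have hφψ : ∀ y ∈ U, ω y ^ (((n : ℝ) - 1) / 2) * ω y ^ ((1 - (n : ℝ)) / 2) = 1 := fun y hy => by
    rw [← Real.rpow_add (hωpos y hy), show ((n : ℝ) - 1) / 2 + (1 - n) / 2 = 0 by ring,
      Real.rpow_zero]
  have hA := differentiableAt_densitizedInverse
    ((hg.contDiffAt (hU.mem_nhds hx)).differentiableAt (by simp))
    ((Matrix.isUnit_iff_isUnit_det _).1 (hginv x hx)).ne_zero
  have key := divOp_mul_of_mul_eq_one hU hx hA (densitizedInverse_symm (hgsymm x hx))
    ((hω.of_le h2).rpow_const_of_ne hωne) ((hω.of_le h2).rpow_const_of_ne hωne) (hu.of_le h2) hφψ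
  have hpow : ω x ^ (((n : ℝ) + 3) / 2) * ω x ^ (2 * ((n + 1 : ℕ) : ℝ) * (-(1 : ℝ) / 2))
      * ω x ^ (((n : ℝ) - 1) / 2) = 1 := by
    rw [← Real.rpow_add (hωpos x hx), ← Real.rpow_add (hωpos x hx),
      show ((n : ℝ) + 3) / 2 + 2 * ((n + 1 : ℕ) : ℝ) * (-1 / 2) + ((n : ℝ) - 1) / 2 = 0 by
        push_cast; ring,
      Real.rpow_zero]
  rw [waveOp_eq_divOp, waveOp_eq_divOp, waveOp_eq_divOp,
    divOp_densitizedInverse_conformal hU hx hωpos, divOp_densitizedInverse_conformal hU hx hωpos,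
    abs_det_conformal_rpow (hωpos x hx)]
  linear_combination
    (-(|(Matrix.of (g x)).det| ^ (-(1 : ℝ) / 2) *
      divOp (densitizedInverse g) (fun y => ω y ^ (((n : ℝ) - 1) / 2) * u y) x)) * hpow
    + (ω x ^ (((n : ℝ) + 3) / 2) * ω x ^ (2 * ((n + 1 : ℕ) : ℝ) * (-(1 : ℝ) / 2))
      * |(Matrix.of (g x)).det| ^ (-(1 : ℝ) / 2)) * key

theorem stmt3 (n : ℕ) (hn : 1 ≤ n) (U : Set (Fin (n + 1) → ℝ)) (hU : IsOpen U)
    (g : (Fin (n + 1) → ℝ) → Fin (n + 1) → Fin (n + 1) → ℝ)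
    (ω u : (Fin (n + 1) → ℝ) → ℝ)
    (hg : ContDiffOn ℝ (⊤ : ℕ∞) g U)
    (hgsymm : ∀ x ∈ U, ∀ μ ν, g x μ ν = g x ν μ)
    (hginv : ∀ x ∈ U, IsUnit (Matrix.of (g x)))
    (hω : ContDiffOn ℝ (⊤ : ℕ∞) ω U) (hωpos : ∀ x ∈ U, 0 < ω x)
    (hu : ContDiffOn ℝ (⊤ : ℕ∞) u U) :
    ∀ x ∈ U,
      waveOp g (fun y => ω y ^ (((n : ℝ) - 1) / 2) * u y) x =
        ω x ^ (((n : ℝ) + 3) / 2) *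
          (waveOp (fun y μ ν => ω y ^ 2 * g y μ ν) u x +
            (-(ω x ^ (((n : ℝ) - 1) / 2) *
                waveOp (fun y μ ν => ω y ^ 2 * g y μ ν)
                  (fun y => ω y ^ ((1 - (n : ℝ)) / 2)) x)) * u x) :=
  stmt3_general n U hU g ω u hg hgsymm hginv hω hωpos hu
end
end

section
/- Let δ, δ′ be reals with 0 < δ′ < δ < 1/2 and 2δ − 1/2 < δ′, let C′ > 0 and K ≥ 0. Suppose f : [−1, 0) → [0, ∞) is continuous, f² is differentiable on (−1, 0), and (f²)′(t) ≤ K²·(−t)^{2δ−2} + ( (1/2 − δ′)·(−t)^{−1} + 4C′·(−t)^{δ−δ′−1} )·f(t)² for all t ∈ (−1, 0). Then for every t ∈ [−1, 0): f(t)² ≤ e^{4C′/(δ−δ′)} · ( (−t)^{δ′−1/2}·f(−1)² + (K²/(δ′ + 1/2 − 2δ))·(−t)^{2δ−1} ). -/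
/-!
Multiply by the integrating factor `W(t) = (-t)^(1/2-δ') · exp(c (-t)^(δ-δ'))` with
`c = 4C'/(δ-δ')`, which kills the linear term of the inequality: `(W f²)' ≤ W K² (-t)^(2δ-2)`.
Since `1 ≤ exp(c (-t)^(δ-δ')) ≤ exp c` on `[-1, 0)`, the forcing term is at most the derivative
of `Φ(t) = (K² e^c / L) (-t)^(-L)`, `L = δ' + 1/2 - 2δ > 0`, so `W f² - Φ` is antitone.
Comparing with `t = -1` and dividing by `W(t) ≥ (-t)^(1/2-δ')` gives the bound.
-/

open Real Set

lemma hasDerivAt_neg_rpow (p : ℝ) {t : ℝ} (ht : t < 0) :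
    HasDerivAt (fun t : ℝ => (-t) ^ p) (-(p * (-t) ^ (p - 1))) t := by
  have := (hasDerivAt_rpow_const (x := -t) (p := p) (Or.inl (by linarith))).comp t
    (hasDerivAt_neg t)
  exact this.congr_deriv (by ring)

lemma le_rpow_neg_mul_add_of_rpow_mul_le {s p r a b g : ℝ} (hs : 0 < s)
    (h : s ^ p * g ≤ a + b * s ^ r) : g ≤ s ^ (-p) * a + b * s ^ (r - p) := by
  rw [rpow_neg hs.le, rpow_sub hs]
  calc g ≤ (a + b * s ^ r) / s ^ p := (le_div_iff₀' (rpow_pos_of_pos hs p)).mpr h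
    _ = (s ^ p)⁻¹ * a + b * (s ^ r / s ^ p) := by ring

/-- If `W' = -W β` and `g' ≤ F + β g`, then `(W g)' ≤ W F`; so `W g - Φ` decreases
as soon as `Φ' ≥ W F`. -/
lemma antitoneOn_mul_sub_of_deriv_le {a b : ℝ} {g W Φ β F Φ' : ℝ → ℝ}
    (hg : ContinuousOn g (Ico a b)) (hgd : DifferentiableOn ℝ g (Ioo a b))
    (hW : ∀ x ∈ Ico a b, HasDerivAt W (-(W x * β x)) x)
    (hΦ : ∀ x ∈ Ico a b, HasDerivAt Φ (Φ' x) x)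
    (hW0 : ∀ x ∈ Ioo a b, 0 ≤ W x)
    (hineq : ∀ x ∈ Ioo a b, deriv g x ≤ F x + β x * g x)
    (hF : ∀ x ∈ Ioo a b, W x * F x ≤ Φ' x) :
    AntitoneOn (fun x => W x * g x - Φ x) (Ico a b) := by
  have hderiv : ∀ x ∈ Ioo a b,
      HasDerivAt (fun x => W x * g x - Φ x) (-(W x * β x) * g x + W x * deriv g x - Φ' x) x :=
    fun x hx => ((hW x (Ioo_subset_Ico_self hx)).mul
      ((hgd x hx).differentiableAt (isOpen_Ioo.mem_nhds hx)).hasDerivAt).sub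
      (hΦ x (Ioo_subset_Ico_self hx))
  apply antitoneOn_of_deriv_nonpos (convex_Ico a b)
  · exact ContinuousOn.sub
      (ContinuousOn.mul (fun x hx => (hW x hx).continuousAt.continuousWithinAt) hg)
      fun x hx => (hΦ x hx).continuousAt.continuousWithinAt
  · rw [interior_Ico]
    exact fun x hx => (hderiv x hx).differentiableAt.differentiableWithinAt
  · rw [interior_Ico]
    intro x hx
    rw [(hderiv x hx).deriv]
    nlinarith [mul_le_mul_of_nonneg_left (hineq x hx) (hW0 x hx), hF x hx]

noncomputable def integratingFactor (p q c t : ℝ) : ℝ := (-t) ^ p * exp (c * (-t) ^ q)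

section integratingFactor

variable {p q c t : ℝ}

lemma hasDerivAt_integratingFactor (ht : t < 0) :
    HasDerivAt (integratingFactor p q c)
      (-(integratingFactor p q c t * (p * (-t)⁻¹ + c * q * (-t) ^ (q - 1)))) t := by
  refine ((hasDerivAt_neg_rpow p ht).mul
    ((hasDerivAt_neg_rpow q ht).const_mul c).exp).congr_deriv ?_
  rw [rpow_sub_one (by linarith), integratingFactor]
  ring

lemma integratingFactor_pos (ht : t < 0) : 0 < integratingFactor p q c t := by
  have : 0 < -t := by linarith
  unfold integratingFactor
  positivity

lemma rpow_le_integratingFactor (hc : 0 ≤ c) (ht : t ≤ 0) :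
    (-t) ^ p ≤ integratingFactor p q c t := by
  have : 0 ≤ -t := by linarith
  refine le_mul_of_one_le_right (rpow_nonneg this p) (one_le_exp ?_)
  positivity

lemma integratingFactor_le (hc : 0 ≤ c) (hq : 0 ≤ q) (ht₁ : -1 ≤ t) (ht₀ : t ≤ 0) :
    integratingFactor p q c t ≤ (-t) ^ p * exp c := by
  have hs : 0 ≤ -t := by linarith
  refine mul_le_mul_of_nonneg_left (exp_le_exp.mpr ?_) (rpow_nonneg hs p)
  exact mul_le_of_le_one_right hc (rpow_le_one hs (by linarith) hq)

lemma integratingFactor_mul_le (hc : 0 ≤ c) (hq : 0 ≤ q) (ht₁ : -1 ≤ t) (ht₀ : t < 0)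
    {M : ℝ} (hM : 0 ≤ M) (r : ℝ) :
    integratingFactor p q c t * (M * (-t) ^ r) ≤ M * exp c * (-t) ^ (p + r) := by
  have hs : 0 < -t := by linarith
  calc integratingFactor p q c t * (M * (-t) ^ r)
      ≤ (-t) ^ p * exp c * (M * (-t) ^ r) :=
        mul_le_mul_of_nonneg_right (integratingFactor_le hc hq ht₁ ht₀.le) (by positivity)
    _ = M * exp c * (-t) ^ (p + r) := by rw [rpow_add hs]; ring

lemma integratingFactor_neg_one : integratingFactor p q c (-1) = exp c := by
  simp [integratingFactor]

end integratingFactor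

theorem stmt13_general (δ δ' C' K : ℝ) (hδ'δ : δ' < δ)
    (hδ'' : 2 * δ - 1 / 2 < δ') (hC' : 0 < C') (f : ℝ → ℝ)
    (hfcont : ContinuousOn f (Set.Ico (-1 : ℝ) 0))
    (hfdiff : DifferentiableOn ℝ (fun t => f t ^ 2) (Set.Ioo (-1 : ℝ) 0))
    (hineq : ∀ t ∈ Set.Ioo (-1 : ℝ) 0,
      deriv (fun t => f t ^ 2) t ≤
        K ^ 2 * (-t) ^ (2 * δ - 2) +
          ((1 / 2 - δ') * (-t)⁻¹ + 4 * C' * (-t) ^ (δ - δ' - 1)) * f t ^ 2) :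
    ∀ t ∈ Set.Ico (-1 : ℝ) 0,
      f t ^ 2 ≤ Real.exp (4 * C' / (δ - δ')) *
          ((-t) ^ (δ' - 1 / 2) * f (-1) ^ 2 + (K ^ 2 / (δ' + 1 / 2 - 2 * δ)) * (-t) ^ (2 * δ - 1)) := by
  intro t ht
  have hs : 0 < -t := by linarith [ht.2]
  have hq : 0 < δ - δ' := by linarith
  have hL : 0 < δ' + 1 / 2 - 2 * δ := by linarith
  have hc : 0 ≤ 4 * C' / (δ - δ') := by positivity
  set E := exp (4 * C' / (δ - δ'))
  set L := δ' + 1 / 2 - 2 * δ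
  set A := K ^ 2 * E / L
  set W := integratingFactor (1 / 2 - δ') (δ - δ') (4 * C' / (δ - δ'))
  have hanti : AntitoneOn (fun x => W x * f x ^ 2 - A * (-x) ^ (-L)) (Ico (-1) 0) := by
    refine antitoneOn_mul_sub_of_deriv_le (hfcont.pow 2) hfdiff
      (fun x hx => (hasDerivAt_integratingFactor hx.2).congr_deriv ?_)
      (fun x hx => (hasDerivAt_neg_rpow _ hx.2).const_mul A)
      (fun x hx => (integratingFactor_pos hx.2).le) hineq fun x hx => ?_
    · rw [div_mul_cancel₀ _ hq.ne']
    · refine (integratingFactor_mul_le hc hq.le hx.1.le hx.2 (sq_nonneg K) _).trans_eq ?_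
      rw [show 1 / 2 - δ' + (2 * δ - 2) = -L - 1 by ring]
      simp only [A, E]
      field_simp
  have hmono : W t * f t ^ 2 - A * (-t) ^ (-L) ≤ E * f (-1) ^ 2 - A := by
    simpa [W, integratingFactor_neg_one] using hanti (left_mem_Ico.mpr (by norm_num)) ht ht.1
  have hlower : (-t) ^ (1 / 2 - δ') * f t ^ 2 ≤ E * f (-1) ^ 2 + A * (-t) ^ (-L) := by
    nlinarith [mul_le_mul_of_nonneg_right (rpow_le_integratingFactor hc ht.2.le
      (p := 1 / 2 - δ') (q := δ - δ')) (sq_nonneg (f t)), show 0 ≤ A by positivity]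
  refine (le_rpow_neg_mul_add_of_rpow_mul_le hs hlower).trans_eq ?_
  rw [show -(1 / 2 - δ') = δ' - 1 / 2 by ring, show -L - (1 / 2 - δ') = 2 * δ - 1 by ring]
  simp only [A]
  ring

theorem stmt13 (δ δ' C' K : ℝ) (hδ'0 : 0 < δ') (hδ'δ : δ' < δ) (hδ : δ < 1 / 2)
    (hδ'' : 2 * δ - 1 / 2 < δ') (hC' : 0 < C') (hK : 0 ≤ K) (f : ℝ → ℝ)
    (hfnonneg : ∀ t ∈ Set.Ico (-1 : ℝ) 0, 0 ≤ f t)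
    (hfcont : ContinuousOn f (Set.Ico (-1 : ℝ) 0))
    (hfdiff : DifferentiableOn ℝ (fun t => f t ^ 2) (Set.Ioo (-1 : ℝ) 0))
    (hineq : ∀ t ∈ Set.Ioo (-1 : ℝ) 0,
      deriv (fun t => f t ^ 2) t ≤
        K ^ 2 * (-t) ^ (2 * δ - 2) +
          ((1 / 2 - δ') * (-t)⁻¹ + 4 * C' * (-t) ^ (δ - δ' - 1)) * f t ^ 2) :
    ∀ t ∈ Set.Ico (-1 : ℝ) 0,
      f t ^ 2 ≤ Real.exp (4 * C' / (δ - δ')) *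
          ((-t) ^ (δ' - 1 / 2) * f (-1) ^ 2 + (K ^ 2 / (δ' + 1 / 2 - 2 * δ)) * (-t) ^ (2 * δ - 1)) :=
  stmt13_general δ δ' C' K hδ'δ hδ'' hC' f hfcont hfdiff hineq
end
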